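/- Let [b_1,…,b_r] be a sequence of integers, all ≥ 2, that is admissible for chains. Then there exists a unique core [e_1,…,e_s] such that [b_1,…,b_r] is obtained from [e_1,…,e_s] by finitely many (possibly zero) T-chain algorithm steps. -/

import Mathlib

/-- The numerator sequence of a sequence `a`: `Pseq a (i+1)` is the number
`P_i` determined by `P_{-1} = 0`, `P_0 = 1` and `P_{i+1} = a_{i+1}·P_i − P_{i−1}`,
where `a k` denotes `a_{k+1}` (0-indexed access). -/
def Pseq (a : ℕ → ℤ) : ℕ → ℤ
  | 0 => 0
  | 1 => 1
  | (k + 2) => a k * Pseq a (k + 1) - Pseq a k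

/-- A finite sequence `a₁,…,aₛ` is admissible if `P_i > 0` for `i = 0,…,s−1`. -/
def Admissible (L : List ℤ) : Prop :=
  ∀ i < L.length, 0 < Pseq (fun k => L.getD k 1) (i + 1)

/-- `chainSeq L k` consists of `k+1` consecutive copies of `L` separated by
`k` single entries equal to `1`. -/
def chainSeq (L : List ℤ) : ℕ → List ℤ
  | 0 => L
  | (k + 1) => chainSeq L k ++ 1 :: L

/-- A core is a finite sequence `[e₁,…,eₛ]` of integers with all `eᵢ ≥ 2` such
that either `s = 1` and `e₁ ≥ 4`, or `s ≥ 2`, `e₁ ≥ 3` and `eₛ ≥ 3`. -/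
def IsCore (E : List ℤ) : Prop :=
  (∀ e ∈ E, 2 ≤ e) ∧
    ((E.length = 1 ∧ 4 ≤ E.headI) ∨ (2 ≤ E.length ∧ 3 ≤ E.headI ∧ 3 ≤ E.getLast!))

/-- A T-chain algorithm step transforms `[a₁,…,aₛ]` into either
`[2, a₁, …, a_{s−1}, aₛ + 1]` or `[a₁ + 1, a₂, …, aₛ, 2]`. -/
inductive TStep : List ℤ → List ℤ → Prop
  | left  (L : List ℤ) (h : L ≠ []) : TStep L (2 :: (L.dropLast ++ [L.getLast h + 1]))
  | right (L : List ℤ) (h : L ≠ []) : TStep L ((L.headI + 1) :: (L.tail ++ [2]))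

/-- `TStepIter k L L'` means `L'` is obtained from `L` by `k` T-chain
algorithm steps. -/
def TStepIter : ℕ → List ℤ → List ℤ → Prop
  | 0 => fun L L' => L = L'
  | (k + 1) => fun L L' => ∃ M, TStep L M ∧ TStepIter k M L'

/-!
If `L` is admissible for chains, every continuant of the infinite word `L 1 L 1 L 1 …` is
positive, because every chain is an initial segment of it. Blowing down a `1`,
`(…, x, 1, y, …) ↦ (…, x - 1, y - 1, …)`, only deletes one continuant, so positivity survives.
For `L = [2, N, t + 1]` blowing down all the `1`s turns the word into `2 M 1 M 1 …` with
`M = [N, t]`, and for `L = [a + 1, N, 2]` into `a + 1, N, 1, M, 1, M, …` with `M = [a, N]`: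
the predecessor of `L` under a T-step is again admissible for chains. A sequence with entries
`≥ 2` beginning and ending with `2` is not (two blow-downs create `…, 1, 1, …`, after which a
continuant is negative), and neither are `[2]` and `[3]`, so undoing T-steps ends at a core.
Uniqueness: a T-step leaves a `2` at one end, a core has none, and entries `≥ 2` determine which
step was taken, so T-steps can be undone in only one way.
-/

section Continuants

open Stream'

theorem Pseq_add_two (a : ℕ → ℤ) (k : ℕ) : Pseq a (k + 2) = a k * Pseq a (k + 1) - Pseq a k :=
  rfl

theorem Pseq_congr {a b : ℕ → ℤ} {n : ℕ} (h : ∀ k, k + 2 ≤ n → a k = b k) :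
    Pseq a n = Pseq b n := by
  induction n using Nat.twoStepInduction with
  | zero => rfl
  | one => rfl
  | more n ih₀ ih₁ =>
    rw [Pseq_add_two, Pseq_add_two, h n le_rfl, ih₀ fun k hk => h k (by omega),
      ih₁ fun k hk => h k (by omega)]

theorem Pseq_append_stream {l : List ℤ} {n : ℕ} (hn : n ≤ l.length + 1) (s t : Stream' ℤ) :
    Pseq (l ++ₛ s).get n = Pseq (l ++ₛ t).get n :=
  Pseq_congr fun k hk => by rw [get_append_left _ _ _ (by omega), get_append_left]

/-- Euler's identity for continuants. -/
theorem Pseq_add (a : Stream' ℤ) (p j : ℕ) :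
    Pseq a.get (p + 1 + j) = Pseq a.get (p + 1) * Pseq (a.drop p).get (j + 1)
      - Pseq a.get p * Pseq (a.drop (p + 1)).get j := by
  induction j using Nat.twoStepInduction with
  | zero => simp [Pseq]
  | one => simp [Pseq, get_drop]; ring
  | more j ih₀ ih₁ =>
    rw [← add_assoc] at ih₁
    rw [show p + 1 + (j + 2) = p + 1 + j + 2 by omega, Pseq_add_two, ih₀, ih₁,
      show j + 2 + 1 = j + 1 + 2 by omega, Pseq_add_two (a.drop p).get (j + 1),
      Pseq_add_two (a.drop (p + 1)).get j, get_drop, get_drop,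
      show p + (j + 1) = p + 1 + j by omega]
    ring

theorem Pseq_blowDown (l : List ℤ) (x y : ℤ) (s : Stream' ℤ) (j : ℕ) :
    Pseq (l ++ₛ ([x - 1, y - 1] ++ₛ s)).get (l.length + 2 + j) =
      Pseq (l ++ₛ ([x, 1, y] ++ₛ s)).get (l.length + 3 + j) := by
  set a := l ++ₛ ([x, 1, y] ++ₛ s)
  set b := l ++ₛ ([x - 1, y - 1] ++ₛ s)
  set n := l.length
  have ha₀ : a.get n = x := get_append_right 0 l _
  have ha₁ : a.get (n + 1) = 1 := get_append_right 1 l _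
  have ha₂ : a.get (n + 2) = y := get_append_right 2 l _
  have hb₀ : b.get n = x - 1 := get_append_right 0 l _
  have hb₁ : b.get (n + 1) = y - 1 := get_append_right 1 l _
  have low : ∀ m ≤ n + 1, Pseq b.get m = Pseq a.get m := fun m hm =>
    Pseq_append_stream hm _ _
  have e₂ : Pseq b.get (n + 2) = Pseq a.get (n + 3) := by
    rw [Pseq_add_two, Pseq_add_two a.get (n + 1), Pseq_add_two a.get n, low (n + 1) le_rfl,
      low n (by omega), hb₀, ha₀, ha₁]
    ring
  have e₃ : Pseq b.get (n + 3) = Pseq a.get (n + 4) := by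
    rw [Pseq_add_two b.get (n + 1), Pseq_add_two a.get (n + 2), e₂, low (n + 1) le_rfl, hb₁, ha₂,
      show Pseq a.get (n + 2) = Pseq a.get (n + 3) + Pseq a.get (n + 1) by
        rw [Pseq_add_two a.get (n + 1), ha₁]; ring]
    ring
  have hb : b.drop (n + 2) = s := by simpa using drop_append_stream (l ++ [x - 1, y - 1]) s
  have ha : a.drop (n + 3) = s := by simpa using drop_append_stream (l ++ [x, 1, y]) s
  rcases j with _ | j
  · exact e₂
  · have hb' : b.drop (n + 2 + 1) = s.drop 1 := by rw [← hb, drop_drop]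
    have ha' : a.drop (n + 3 + 1) = s.drop 1 := by rw [← ha, drop_drop]
    rw [show n + 2 + (j + 1) = n + 2 + 1 + j by omega,
      show n + 3 + (j + 1) = n + 3 + 1 + j by omega,
      Pseq_add b, Pseq_add a, hb, hb', ha, ha', e₂, e₃]

def AdmissibleStream (a : Stream' ℤ) : Prop :=
  ∀ n, 0 < Pseq a.get (n + 1)

namespace AdmissibleStream

variable {a : Stream' ℤ}

theorem Pseq_nonneg (h : AdmissibleStream a) : ∀ n, 0 ≤ Pseq a.get n
  | 0 => le_rfl
  | n + 1 => (h n).le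

theorem drop (h : AdmissibleStream a) (p : ℕ) : AdmissibleStream (a.drop p) := by
  intro j
  induction j generalizing p with
  | zero => exact one_pos
  | succ j ih =>
    have euler := Pseq_add a p (j + 1)
    rw [← add_assoc] at euler
    have := h (p + 1 + j)
    have := h.Pseq_nonneg p
    have := ih (p + 1)
    nlinarith [h p]

theorem of_forall_exists_prefix
    (h : ∀ n, ∃ (l : List ℤ) (s t : Stream' ℤ), n ≤ l.length ∧ a = l ++ₛ s ∧
      AdmissibleStream (l ++ₛ t)) :
    AdmissibleStream a := by
  intro n
  obtain ⟨l, s, t, hn, rfl, ht⟩ := h n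
  rw [Pseq_append_stream (by omega) s t]
  exact ht n

theorem contract {l : List ℤ} {x y : ℤ} {s : Stream' ℤ}
    (h : AdmissibleStream (l ++ₛ ([x, 1, y] ++ₛ s))) :
    AdmissibleStream (l ++ₛ ([x - 1, y - 1] ++ₛ s)) := by
  intro i
  rcases le_or_gt i l.length with hi | hi
  · rw [Pseq_append_stream (by omega) _ ([x, 1, y] ++ₛ s)]
    exact h i
  · obtain ⟨j, rfl⟩ : ∃ j, i = l.length + 1 + j := ⟨i - (l.length + 1), by omega⟩
    rw [add_right_comm, Pseq_blowDown, add_right_comm]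
    exact h _

end AdmissibleStream

theorem not_admissibleStream_one_one {l : List ℤ} (hl : l ≠ []) (s : Stream' ℤ) :
    ¬ AdmissibleStream (l ++ₛ ([1, 1] ++ₛ s)) := by
  intro h
  set a := l ++ₛ ([1, 1] ++ₛ s)
  set n := l.length
  have h₀ : a.get n = 1 := get_append_right 0 l _
  have h₁ : a.get (n + 1) = 1 := get_append_right 1 l _
  have hpos : 0 < Pseq a.get n := by
    obtain ⟨m, hm⟩ : ∃ m, n = m + 1 :=
      Nat.exists_eq_succ_of_ne_zero (List.length_pos_iff.2 hl).ne'
    rw [hm]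
    exact h m
  have := h (n + 2)
  rw [Pseq_add_two a.get (n + 1), Pseq_add_two a.get n, h₀, h₁] at this
  linarith

def chainStream (L : List ℤ) : Stream' ℤ :=
  cycle (L ++ [1]) (by simp)

theorem chainStream_eq (L : List ℤ) : chainStream L = (L ++ [1]) ++ₛ chainStream L :=
  cycle_eq _ _

theorem flatten_replicate_append_chainStream (L : List ℤ) (k : ℕ) :
    (List.replicate k (L ++ [1])).flatten ++ₛ chainStream L = chainStream L := by
  induction k with
  | zero => rfl
  | succ k ih => rw [List.replicate_succ, List.flatten_cons, append_append_stream, ih,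
      ← chainStream_eq]

theorem chainSeq_append_chainStream (L : List ℤ) (k : ℕ) :
    (chainSeq L k ++ [1]) ++ₛ chainStream L = chainStream L := by
  induction k with
  | zero => exact (chainStream_eq L).symm
  | succ k ih =>
    rw [chainSeq, List.append_assoc, List.cons_append, ← List.singleton_append,
      ← List.append_assoc, append_append_stream, ← chainStream_eq, ih]

theorem le_length_chainSeq (L : List ℤ) (k : ℕ) : k ≤ (chainSeq L k).length := by
  induction k with
  | zero => exact Nat.zero_le _
  | succ k ih => simp only [chainSeq, List.length_append, List.length_cons]; omega

theorem getD_one_eq_get (L : List ℤ) : (fun k => L.getD k 1) = (L ++ₛ const 1).get := by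
  funext k
  rcases lt_or_ge k L.length with hk | hk
  · rw [get_append_left _ _ _ hk, List.getD_eq_getElem]
  · obtain ⟨m, rfl⟩ := Nat.exists_eq_add_of_le hk
    rw [get_append_right, get_const, List.getD_eq_default _ _ hk]

theorem admissibleStream_chainStream {L : List ℤ} (h : ∀ k, Admissible (chainSeq L k)) :
    AdmissibleStream (chainStream L) := by
  intro i
  have hi : i < (chainSeq L (i + 1)).length := le_length_chainSeq L (i + 1)
  have := h (i + 1) i hi
  rwa [getD_one_eq_get, Pseq_append_stream (by omega) _ ([1] ++ₛ chainStream L),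
    ← append_append_stream, chainSeq_append_chainStream] at this

theorem four_le_of_admissibleStream_chainStream {x : ℤ} (hx : 2 ≤ x)
    (h : AdmissibleStream (chainStream [x])) : 4 ≤ x := by
  have hc : chainStream [x] = [x, 1, x, 1, x, 1] ++ₛ chainStream [x] := by
    simpa using (flatten_replicate_append_chainStream [x] 3).symm
  have h₃ := h 3
  have h₅ := h 5
  rw [hc] at h₃ h₅
  simp only [Pseq, Stream'.get, appendStream', cons, mul_one, sub_zero, one_mul] at h₃ h₅
  by_contra! hx₄
  interval_cases x <;> simp at h₃ h₅

theorem not_admissibleStream_chainStream_two_two (N : List ℤ) :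
    ¬ AdmissibleStream (chainStream (2 :: (N ++ [2]))) := by
  intro h
  rw [chainStream_eq, chainStream_eq] at h
  have := (show AdmissibleStream ((2 :: N) ++ₛ ([2, 1, 2] ++ₛ
      ((N ++ [2, 1]) ++ₛ chainStream (2 :: (N ++ [2]))))) by
    simpa [cons_append_stream] using h).contract
  exact not_admissibleStream_one_one (List.cons_ne_nil 2 N) _ (by simpa using this)

theorem admissibleStream_chainStream_of_prefixes {X M : List ℤ} {r : ℕ → Stream' ℤ}
    (h : ∀ k, AdmissibleStream ((X ++ (List.replicate k (M ++ [1])).flatten) ++ₛ r k)) :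
    AdmissibleStream (chainStream M) := by
  have hlen : ∀ k, k ≤ (X ++ (List.replicate k (M ++ [1])).flatten).length := fun k => by
    simp only [List.length_append, List.length_flatten, List.map_replicate, List.length_cons,
      List.length_nil, zero_add, List.sum_replicate, smul_eq_mul, mul_add, mul_one]
    omega
  have hX : AdmissibleStream (X ++ₛ chainStream M) :=
    AdmissibleStream.of_forall_exists_prefix fun k =>
      ⟨_, chainStream M, r k, hlen k,
        by rw [append_append_stream, flatten_replicate_append_chainStream], h k⟩
  simpa only [drop_append_stream] using hX.drop X.length

theorem admissibleStream_chainStream_of_left_step {N : List ℤ} {t : ℤ}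
    (h : AdmissibleStream (chainStream (2 :: (N ++ [t + 1])))) :
    AdmissibleStream (chainStream (N ++ [t])) := by
  set L : List ℤ := 2 :: (N ++ [t + 1])
  -- after `k` blow-downs the word reads `2 (M 1)^k N (t + 1) 1 L 1 L 1 …`
  refine admissibleStream_chainStream_of_prefixes (X := [2])
    (r := fun _ => N ++ₛ ([t + 1, 1] ++ₛ chainStream L)) fun k => ?_
  induction k with
  | zero =>
    rw [chainStream_eq L] at h
    simpa [L, cons_append_stream] using h
  | succ k ih =>
    rw [chainStream_eq L] at ih
    have := (show AdmissibleStream (([2] ++ (List.replicate k (N ++ [t] ++ [1])).flatten ++ N) ++ₛ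
      ([t + 1, 1, 2] ++ₛ ((N ++ [t + 1, 1]) ++ₛ chainStream L))) by
        simpa [L, cons_append_stream] using ih).contract
    simpa [List.replicate_succ', cons_append_stream] using this

theorem admissibleStream_chainStream_of_right_step {N : List ℤ} {a : ℤ}
    (h : AdmissibleStream (chainStream ((a + 1) :: (N ++ [2])))) :
    AdmissibleStream (chainStream (a :: N)) := by
  set L : List ℤ := (a + 1) :: (N ++ [2])
  -- after `k + 1` blow-downs the word reads `(a + 1) N 1 (M 1)^k M 2 1 L 1 L 1 …`
  refine admissibleStream_chainStream_of_prefixes (X := (a + 1) :: N ++ [1])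
    (r := fun _ => (a :: N) ++ₛ ([2, 1] ++ₛ chainStream L)) fun k => ?_
  induction k with
  | zero =>
    rw [chainStream_eq L, chainStream_eq L] at h
    have := (show AdmissibleStream (((a + 1) :: N) ++ₛ ([2, 1, a + 1] ++ₛ
      ((N ++ [2, 1]) ++ₛ chainStream L))) by simpa [L, cons_append_stream] using h).contract
    simpa [cons_append_stream] using this
  | succ k ih =>
    rw [chainStream_eq L] at ih
    have := (show AdmissibleStream
      (((a + 1) :: N ++ [1] ++ (List.replicate k (a :: N ++ [1])).flatten ++ a :: N) ++ₛ
        ([2, 1, a + 1] ++ₛ ((N ++ [2, 1]) ++ₛ chainStream L))) by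
        simpa [L, cons_append_stream] using ih).contract
    simpa [List.replicate_succ', cons_append_stream] using this

end Continuants

open Relation

namespace TStep

variable {M M' L : List ℤ}

theorem exists_left_or_exists_right (h : TStep M L) :
    (∃ N t, M = N ++ [t] ∧ L = 2 :: (N ++ [t + 1])) ∨
      (∃ a N, M = a :: N ∧ L = (a + 1) :: (N ++ [2])) := by
  cases h with
  | left hM =>
    obtain ⟨N, t, rfl⟩ := (List.eq_nil_or_concat' M).resolve_left hM
    exact Or.inl ⟨N, t, rfl, by simp⟩
  | right hM =>
    obtain ⟨a, N, rfl⟩ := List.exists_cons_of_ne_nil hM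
    exact Or.inr ⟨a, N, rfl, rfl⟩

theorem ne_nil (h : TStep M L) : M ≠ [] := by
  cases h <;> assumption

theorem length_eq (h : TStep M L) : L.length = M.length + 1 := by
  rcases h.exists_left_or_exists_right with ⟨N, t, rfl, rfl⟩ | ⟨a, N, rfl, rfl⟩ <;> simp

theorem two_le (h : TStep M L) (hM : ∀ b ∈ M, 2 ≤ b) : ∀ b ∈ L, 2 ≤ b := by
  rcases h.exists_left_or_exists_right with ⟨N, t, rfl, rfl⟩ | ⟨a, N, rfl, rfl⟩ <;>
    rw [List.forall_mem_cons, List.forall_mem_append, List.forall_mem_singleton]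
  · rw [List.forall_mem_append, List.forall_mem_singleton] at hM
    exact ⟨le_rfl, hM.1, by omega⟩
  · rw [List.forall_mem_cons] at hM
    exact ⟨by omega, hM.2, le_rfl⟩

theorem admissibleStream_chainStream (h : TStep M L)
    (hL : AdmissibleStream (chainStream L)) : AdmissibleStream (chainStream M) := by
  rcases h.exists_left_or_exists_right with ⟨N, t, rfl, rfl⟩ | ⟨a, N, rfl, rfl⟩
  · exact admissibleStream_chainStream_of_left_step hL
  · exact admissibleStream_chainStream_of_right_step hL

theorem eq_of_tStep (h : TStep M L) (h' : TStep M' L) (hM : ∀ b ∈ M, 2 ≤ b)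
    (hM' : ∀ b ∈ M', 2 ≤ b) : M = M' := by
  rcases h.exists_left_or_exists_right with ⟨N, t, rfl, rfl⟩ | ⟨a, N, rfl, rfl⟩ <;>
    rcases h'.exists_left_or_exists_right with ⟨N', t', rfl, hL⟩ | ⟨a', N', rfl, hL⟩
  · simp_all
  · have := (List.cons_eq_cons.1 hL).1
    have := hM' a' (by simp)
    omega
  · have := (List.cons_eq_cons.1 hL).1
    have := hM a (by simp)
    omega
  · simp_all

end TStep

theorem getLast!_cons_append_singleton {α : Type*} [Inhabited α] (a z : α) (N : List α) :
    (a :: (N ++ [z])).getLast! = z := by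
  rw [List.getLast!_eq_getLast?_getD, ← List.cons_append, List.getLast?_concat]
  rfl

theorem IsCore.three_le_headI {E : List ℤ} (h : IsCore E) : 3 ≤ E.headI := by
  rcases h.2 with ⟨-, h⟩ | ⟨-, h, -⟩ <;> omega

theorem IsCore.three_le_getLast! {E : List ℤ} (h : IsCore E) : 3 ≤ E.getLast! := by
  rcases h.2 with ⟨hlen, h⟩ | ⟨-, -, h⟩
  · obtain ⟨e, rfl⟩ := List.length_eq_one_iff.1 hlen
    exact le_trans (by norm_num) h
  · exact h

theorem IsCore.not_tStep {E M : List ℤ} (h : IsCore E) : ¬ TStep M E := by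
  intro hs
  rcases hs.exists_left_or_exists_right with ⟨N, t, -, rfl⟩ | ⟨a, N, -, rfl⟩
  · have := h.three_le_headI
    simp at this
  · have := h.three_le_getLast!
    rw [getLast!_cons_append_singleton] at this
    omega

theorem isCore_or_exists_tStep {L : List ℤ} (hlen : 2 ≤ L.length) (h2 : ∀ b ∈ L, 2 ≤ b)
    (h : AdmissibleStream (chainStream L)) :
    IsCore L ∨ ∃ M, TStep M L ∧ ∀ b ∈ M, 2 ≤ b := by
  obtain ⟨a, T, rfl⟩ :=
    List.exists_cons_of_ne_nil (List.ne_nil_of_length_pos (by omega : 0 < L.length))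
  obtain ⟨N, z, rfl⟩ := (List.eq_nil_or_concat' T).resolve_left (by rintro rfl; simp at hlen)
  obtain ⟨ha, hN, hz⟩ : 2 ≤ a ∧ (∀ b ∈ N, 2 ≤ b) ∧ 2 ≤ z := by
    rwa [List.forall_mem_cons, List.forall_mem_append, List.forall_mem_singleton] at h2
  rcases ha.eq_or_lt with rfl | ha <;> rcases hz.eq_or_lt with rfl | hz
  · exact absurd h (not_admissibleStream_chainStream_two_two N)
  · refine Or.inr ⟨N ++ [z - 1], by simpa using TStep.left (N ++ [z - 1]) (by simp), ?_⟩
    rw [List.forall_mem_append, List.forall_mem_singleton]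
    exact ⟨hN, by omega⟩
  · refine Or.inr ⟨(a - 1) :: N, by simpa using TStep.right ((a - 1) :: N) (by simp), ?_⟩
    rw [List.forall_mem_cons]
    exact ⟨by omega, hN⟩
  · exact Or.inl ⟨h2, Or.inr ⟨by simp, by simp; omega,
      by rw [getLast!_cons_append_singleton]; omega⟩⟩

theorem exists_tStepIter_iff_reflTransGen {E L : List ℤ} :
    (∃ k, TStepIter k E L) ↔ ReflTransGen TStep E L := by
  constructor
  · rintro ⟨k, hk⟩
    induction k generalizing E with
    | zero => exact (show E = L from hk) ▸ .refl
    | succ k ih =>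
      obtain ⟨M, hEM, hML⟩ := hk
      exact .head hEM (ih hML)
  · intro h
    induction h using ReflTransGen.head_induction_on with
    | refl => exact ⟨0, rfl⟩
    | head hEM _ ih =>
      obtain ⟨k, hk⟩ := ih
      exact ⟨k + 1, _, hEM, hk⟩

theorem TStep.two_le_of_reflTransGen {E L : List ℤ} (h : ReflTransGen TStep E L)
    (hE : ∀ b ∈ E, 2 ≤ b) : ∀ b ∈ L, 2 ≤ b := by
  induction h with
  | refl => exact hE
  | tail _ hs ih => exact hs.two_le ih

theorem exists_isCore_reflTransGen (L : List ℤ) (hne : L ≠ []) (h2 : ∀ b ∈ L, 2 ≤ b)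
    (h : AdmissibleStream (chainStream L)) : ∃ E, IsCore E ∧ ReflTransGen TStep E L := by
  rcases Nat.lt_or_ge L.length 2 with hlen | hlen
  · obtain ⟨x, rfl⟩ := List.length_eq_one_iff.1
      (show L.length = 1 by have := List.length_pos_iff.2 hne; omega)
    have hx := h2 x (by simp)
    exact ⟨[x], ⟨h2, Or.inl ⟨rfl, four_le_of_admissibleStream_chainStream hx h⟩⟩, .refl⟩
  rcases isCore_or_exists_tStep hlen h2 h with hL | ⟨M, hML, hM⟩
  · exact ⟨L, hL, .refl⟩
  · have := hML.length_eq
    obtain ⟨E, hE, hEM⟩ :=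
      exists_isCore_reflTransGen M hML.ne_nil hM (hML.admissibleStream_chainStream h)
    exact ⟨E, hE, hEM.tail hML⟩
termination_by L.length

theorem IsCore.eq_of_reflTransGen {E₁ E₂ L : List ℤ} (h₁ : IsCore E₁) (h₂ : IsCore E₂)
    (hE₁ : ReflTransGen TStep E₁ L) (hE₂ : ReflTransGen TStep E₂ L) : E₁ = E₂ := by
  induction hE₁ generalizing E₂ with
  | refl =>
    rcases hE₂.cases_tail with rfl | ⟨M, -, hM⟩
    · rfl
    · exact absurd hM h₁.not_tStep
  | tail hE₁M hML ih =>
    rcases hE₂.cases_tail with rfl | ⟨M', hE₂M', hM'⟩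
    · exact absurd hML h₂.not_tStep
    · refine ih h₂ ((hML.eq_of_tStep hM' ?_ ?_) ▸ hE₂M')
      · exact TStep.two_le_of_reflTransGen hE₁M h₁.1
      · exact TStep.two_le_of_reflTransGen hE₂M' h₂.1

/-- If `[b₁,…,b_r]` (all entries `≥ 2`) is admissible for chains, then there
exists a unique core `[e₁,…,eₛ]` such that `[b₁,…,b_r]` is obtained from
`[e₁,…,eₛ]` by finitely many (possibly zero) T-chain algorithm steps. -/
theorem stmt9 (L : List ℤ) (hne : L ≠ []) (h2 : ∀ b ∈ L, 2 ≤ b)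
    (hadm : ∀ k : ℕ, Admissible (chainSeq L k)) :
    ∃! E : List ℤ, IsCore E ∧ ∃ k : ℕ, TStepIter k E L := by
  obtain ⟨E, hE, hEL⟩ :=
    exists_isCore_reflTransGen L hne h2 (admissibleStream_chainStream hadm)
  refine ⟨E, ⟨hE, exists_tStepIter_iff_reflTransGen.2 hEL⟩, ?_⟩
  rintro E' ⟨hE', hE'L⟩
  exact hE'.eq_of_reflTransGen hE (exists_tStepIter_iff_reflTransGen.1 hE'L) hEL
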